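/- Consider the map from {susceptance triples (b_ab, b_bc, b_ca) ∈ ℝ³} to ℂ given by the negative-sequence component of the resulting delta line currents under balanced unit voltages V_a = 1, V_b = a², V_c = a (a = exp(2πi/3)). This map is ℝ-linear and surjective onto ℂ. -/
import Mathlib


open Complex

/-- The map from susceptance triples to the negative-sequence component of the
delta line currents (balanced unit voltages) is ℝ-linear and surjective onto ℂ. -/
theorem negseq_of_susceptances_linear_surjective
    (a : ℂ) (ha : a = Complex.exp (2 * Real.pi * Complex.I / 3))
    (f : ℝ × ℝ × ℝ → ℂ)
    (hf : ∀ b : ℝ × ℝ × ℝ,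
      f b =
        (let V_a : ℂ := 1
         let V_b : ℂ := a ^ 2
         let V_c : ℂ := a
         let I_ab : ℂ := Complex.I * (b.1 : ℂ) * (V_a - V_b)
         let I_bc : ℂ := Complex.I * (b.2.1 : ℂ) * (V_b - V_c)
         let I_ca : ℂ := Complex.I * (b.2.2 : ℂ) * (V_c - V_a)
         let I_a : ℂ := I_ab - I_ca
         let I_b : ℂ := I_bc - I_ab
         let I_c : ℂ := I_ca - I_bc
         (I_a + a ^ 2 * I_b + a * I_c) / 3)) :
    IsLinearMap ℝ f ∧ Function.Surjective f := by
  set s : ℝ := Real.sqrt 3 with hsdef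
  have hs0 : s ≠ 0 := by
    have := Real.sqrt_pos.mpr (by norm_num : (3:ℝ) > 0)
    exact ne_of_gt this
  have hs2' : (s : ℂ) ^ 2 = 3 := by
    norm_cast
    exact Real.sq_sqrt (by norm_num)
  -- explicit value of a
  have ha' : a = -1/2 + (s/2) * I := by
    rw [ha]
    have h : (2 * Real.pi * Complex.I / 3) = ((2 * Real.pi / 3 : ℝ) : ℂ) * I := by
      push_cast; ring
    rw [h, Complex.exp_mul_I, ← Complex.ofReal_cos, ← Complex.ofReal_sin]
    have hc : Real.cos (2 * Real.pi / 3) = -(1/2) := by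
      have h23 : (2 * Real.pi / 3) = Real.pi - Real.pi / 3 := by ring
      rw [h23, Real.cos_pi_sub, Real.cos_pi_div_three]
    have hsin : Real.sin (2 * Real.pi / 3) = Real.sqrt 3 / 2 := by
      have h23 : (2 * Real.pi / 3) = Real.pi - Real.pi / 3 := by ring
      rw [h23, Real.sin_pi_sub, Real.sin_pi_div_three]
    rw [hc, hsin]; push_cast; ring
  have hq : a ^ 2 + a + 1 = 0 := by
    rw [ha']
    linear_combination ((s:ℂ)^2/4) * Complex.I_sq - (1/4) * hs2'
  have ha2 : a ^ 2 = -1/2 - (s/2) * I := by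
    rw [ha']
    linear_combination ((s:ℂ)^2/4) * Complex.I_sq - (1/4) * hs2'
  -- algebraic simplification of f
  have key1 : ∀ b : ℝ × ℝ × ℝ,
      f b = -I * (a ^ 2 * (b.1 : ℂ) + (b.2.1 : ℂ) + a * (b.2.2 : ℂ)) := by
    intro b
    rw [hf b]
    linear_combination (I/3) * ((b.1:ℂ)*(a^2 - a + 1) + (b.2.1:ℂ)*(a^2 - 3*a + 3)
      + (b.2.2:ℂ)) * hq
  -- numeric form of f
  have key2 : ∀ b : ℝ × ℝ × ℝ,
      f b = ((s/2*(b.2.2 - b.1) : ℝ) : ℂ) + ((b.1/2 - b.2.1 + b.2.2/2 : ℝ) : ℂ) * I := by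
    intro b
    rw [key1 b, ha2, ha']
    push_cast
    linear_combination ((s:ℂ)/2*((b.1:ℂ) - (b.2.2:ℂ))) * Complex.I_sq
  constructor
  · constructor
    · intro x y
      rw [key1 (x + y), key1 x, key1 y]
      push_cast [Prod.fst_add, Prod.snd_add]
      ring
    · intro c x
      rw [key1 (c • x), key1 x]
      push_cast [Prod.smul_fst, Prod.smul_snd, smul_eq_mul, Complex.real_smul]
      ring
  · intro z
    refine ⟨(-2*z.re/s, -z.re/s - z.im, 0), ?_⟩
    rw [key2]
    have h1 : s/2*((0:ℝ) - (-2*z.re/s)) = z.re := by field_simp; ring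
    have h2 : (-2*z.re/s)/2 - (-z.re/s - z.im) + (0:ℝ)/2 = z.im := by field_simp; ring
    simp only []
    rw [h1, h2, Complex.re_add_im]
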